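/- arXiv:1808.01222 — 4 statements merged into one kernel-verified Lean document; each statement's English description precedes it below -/
import Mathlib

section
/- For every integer m ≥ 3, the value of the continued logarithm to base m does not depend on the initial point: for any sequence (d_k) of digits in {1,...,m-1} and any x, y ∈ [0,1], lim_{n→∞} (T_{d_n} ∘ ⋯ ∘ T_{d_1})(x) = lim_{n→∞} (T_{d_n} ∘ ⋯ ∘ T_{d_1})(y). -/
noncomputable def T (m d : ℕ) (x : ℝ) : ℝ := Real.log (d + x) / Real.log m

/-- `F m d x n = T_{d n} ∘ ⋯ ∘ T_{d 1} (x)` (digits indexed from 0). -/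
noncomputable def F (m : ℕ) (d : ℕ → ℕ) (x : ℝ) : ℕ → ℝ
  | 0 => x
  | n + 1 => T m (d n) (F m d x n)

/-!
Every digit is at least 1, so all orbits stay in `[0, ∞)`, where each `T_d` is a contraction
with ratio `1 / log m < 1`: `log` is 1-Lipschitz on `[1, ∞)`. Hence two orbits driven by the
same digits approach each other geometrically, and their limits coincide.
-/

open Filter Topology

lemma Real.one_lt_log_of_three_le {x : ℝ} (hx : 3 ≤ x) : 1 < Real.log x := by
  rw [Real.lt_log_iff_exp_lt (by linarith)]
  linarith [Real.exp_one_lt_three]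

lemma Real.abs_log_sub_log_le_of_one_le {u v : ℝ} (hu : 1 ≤ u) (hv : 1 ≤ v) :
    |Real.log u - Real.log v| ≤ |u - v| := by
  wlog h : v ≤ u generalizing u v
  · rw [abs_sub_comm, abs_sub_comm u v]
    exact this hv hu (le_of_not_ge h)
  have hv0 : 0 < v := by linarith
  have hlog_le : Real.log v ≤ Real.log u := Real.log_le_log hv0 h
  rw [abs_of_nonneg (sub_nonneg.2 hlog_le), abs_of_nonneg (sub_nonneg.2 h),
    ← Real.log_div (by linarith) hv0.ne']
  calc Real.log (u / v) ≤ u / v - 1 := Real.log_le_sub_one_of_pos (by positivity)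
    _ = (u - v) / v := by field_simp
    _ ≤ u - v := div_le_self (by linarith) hv

section Orbits

variable {m : ℕ} {d : ℕ → ℕ} {x y : ℝ}

lemma T_nonneg {d : ℕ} (hd : 1 ≤ d) (hx : 0 ≤ x) : 0 ≤ T m d x := by
  have hd' : (1 : ℝ) ≤ d := by exact_mod_cast hd
  exact div_nonneg (Real.log_nonneg (by linarith)) (Real.log_natCast_nonneg m)

lemma F_nonneg (hd : ∀ k, 1 ≤ d k) (hx : 0 ≤ x) : ∀ n, 0 ≤ F m d x n
  | 0 => hx
  | n + 1 => T_nonneg (hd n) (F_nonneg hd hx n)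

lemma abs_T_sub_T_le {d : ℕ} (hd : 1 ≤ d) (hx : 0 ≤ x) (hy : 0 ≤ y) :
    |T m d x - T m d y| ≤ |x - y| / Real.log m := by
  have hd' : (1 : ℝ) ≤ d := by exact_mod_cast hd
  rw [T, T, ← sub_div, abs_div, abs_of_nonneg (Real.log_natCast_nonneg m)]
  refine div_le_div_of_nonneg_right ?_ (Real.log_natCast_nonneg m)
  simpa using Real.abs_log_sub_log_le_of_one_le (u := d + x) (v := d + y)
    (by linarith) (by linarith)

lemma abs_F_sub_F_le (hd : ∀ k, 1 ≤ d k) (hx : 0 ≤ x) (hy : 0 ≤ y) (n : ℕ) :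
    |F m d x n - F m d y n| ≤ |x - y| / Real.log m ^ n := by
  induction n with
  | zero => simp [F]
  | succ n ih =>
    calc |F m d x (n + 1) - F m d y (n + 1)|
        ≤ |F m d x n - F m d y n| / Real.log m :=
          abs_T_sub_T_le (hd n) (F_nonneg hd hx n) (F_nonneg hd hy n)
      _ ≤ |x - y| / Real.log m ^ n / Real.log m := by
          gcongr
      _ = |x - y| / Real.log m ^ (n + 1) := by rw [div_div, pow_succ]

lemma tendsto_F_sub_F (hm : 1 < Real.log m) (hd : ∀ k, 1 ≤ d k) (hx : 0 ≤ x) (hy : 0 ≤ y) :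
    Tendsto (fun n => F m d x n - F m d y n) atTop (𝓝 0) := by
  have hgeom : Tendsto (fun n => |x - y| * (Real.log m)⁻¹ ^ n) atTop (𝓝 0) := by
    simpa using (tendsto_pow_atTop_nhds_zero_of_lt_one (by positivity)
      (inv_lt_one_of_one_lt₀ hm)).const_mul |x - y|
  refine squeeze_zero_norm (fun n => ?_) hgeom
  simpa [div_eq_mul_inv, inv_pow] using abs_F_sub_F_le hd hx hy n

end Orbits

theorem stmt5 (m : ℕ) (hm : 3 ≤ m) (d : ℕ → ℕ)
    (hd : ∀ k, d k ∈ Finset.Icc 1 (m - 1))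
    (x y : ℝ) (hx : x ∈ Set.Icc (0 : ℝ) 1) (hy : y ∈ Set.Icc (0 : ℝ) 1)
    (Lx Ly : ℝ)
    (hLx : Filter.Tendsto (F m d x) Filter.atTop (nhds Lx))
    (hLy : Filter.Tendsto (F m d y) Filter.atTop (nhds Ly)) :
    Lx = Ly := by
  have hlog : 1 < Real.log m := Real.one_lt_log_of_three_le (by exact_mod_cast hm)
  have hd_pos : ∀ k, 1 ≤ d k := fun k => (Finset.mem_Icc.1 (hd k)).1
  have hlim : Lx - Ly = 0 :=
    tendsto_nhds_unique (hLx.sub hLy) (tendsto_F_sub_F hlog hd_pos hx.1 hy.1)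
  exact sub_eq_zero.1 hlim
end

section
/- For every integer m ≥ 3, ∑_{i=1}^{m-1} 1/(log(m-1) + i·log(m)) < 1. -/
/-!
Since `1 / x` is convex, each term `1 / (a + i L)` is at most the mean of `1 / x` over
`[a + (i - 1/2) L, a + (i + 1/2) L]`, so with `a = log (m - 1)`, `L = log m`, `n = m - 1` the sum
telescopes to at most `(log (a + (n + 1/2) L) - log (a + L/2)) / L`. This is `< 1` iff
`a + (m - 1/2) L < m (a + L/2)`, i.e. `L < 2 a`, i.e. `m < (m - 1) ^ 2`, which holds for `m ≥ 3`.
-/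

open Real Finset

theorem two_mul_div_le_log_add_sub_log_sub {c h : ℝ} (hh : 0 ≤ h) (hc : h < c) :
    2 * h / c ≤ log (c + h) - log (c - h) := by
  have hc0 : 0 < c := hh.trans_lt hc
  have hx : |h / c| < 1 := by
    rwa [abs_of_nonneg (div_nonneg hh hc0.le), div_lt_one hc0]
  have hfirst := le_hasSum (hasSum_log_sub_log_of_abs_lt_one hx) 0 fun k _ => by positivity
  have hadd : 1 + h / c = (c + h) / c := by field_simp
  have hsub : 1 - h / c = (c - h) / c := by field_simp
  rw [hadd, hsub, log_div (by linarith) hc0.ne', log_div (by linarith) hc0.ne'] at hfirst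
  norm_num at hfirst
  rwa [mul_div_assoc]

theorem sum_Icc_one_div_add_mul_le {a L : ℝ} (hL : 0 < L) (ha : 0 < a + L / 2) (n : ℕ) :
    ∑ i ∈ Icc 1 n, 1 / (a + i * L) ≤ (log (a + (n + 1 / 2) * L) - log (a + L / 2)) / L := by
  induction n with
  | zero => simp [div_eq_inv_mul]
  | succ n ih =>
    have hn : (0 : ℝ) ≤ n * L := by positivity
    have step : 1 / (a + (n + 1) * L) ≤
        (log (a + (n + 1 + 1 / 2) * L) - log (a + (n + 1 / 2) * L)) / L := by
      have hmid := two_mul_div_le_log_add_sub_log_sub (c := a + (n + 1) * L) (h := L / 2)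
        (by positivity) (by linarith)
      rw [show a + (n + 1) * L + L / 2 = a + (n + 1 + 1 / 2) * L by ring,
        show a + (n + 1) * L - L / 2 = a + (n + 1 / 2) * L by ring] at hmid
      rw [le_div_iff₀ hL]
      calc _ = 2 * (L / 2) / (a + (n + 1) * L) := by ring
        _ ≤ _ := hmid
    rw [sum_Icc_succ_top (by omega)]
    push_cast
    calc _ ≤ (log (a + (n + 1 / 2) * L) - log (a + L / 2)) / L +
          (log (a + (n + 1 + 1 / 2) * L) - log (a + (n + 1 / 2) * L)) / L := add_le_add ih step
      _ = _ := by ring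

theorem stmt16 (m : ℕ) (hm : 3 ≤ m) :
    ∑ i ∈ Finset.Icc 1 (m - 1), 1 / (Real.log (m - 1) + i * Real.log m) < 1 := by
  have hm' : (3 : ℝ) ≤ m := by exact_mod_cast hm
  have hL : 0 < log m := log_pos (by linarith)
  have ha : 0 < log (m - 1) := log_pos (by linarith)
  have hLa : log m < 2 * log (m - 1) := by
    have := log_lt_log (by positivity) (show (m : ℝ) < (m - 1) ^ 2 by nlinarith)
    rwa [log_pow, Nat.cast_ofNat] at this
  have hcast : ((m - 1 : ℕ) : ℝ) = m - 1 := by rw [Nat.cast_sub (by omega), Nat.cast_one]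
  refine (sum_Icc_one_div_add_mul_le hL (by positivity) (m - 1)).trans_lt ?_
  have harg : log (m - 1) + (m - 1 + 1 / 2) * log m < m * (log (m - 1) + log m / 2) := by
    nlinarith [mul_pos (show (0 : ℝ) < m - 1 by linarith) (sub_pos.2 hLa)]
  have hlog := log_lt_log (by nlinarith) harg
  rw [log_mul (by positivity) (by positivity)] at hlog
  rw [div_lt_one hL, hcast]
  linarith
end

section
/- Let m ≥ 3 be an integer and let d > 0 be the unique solution of ∑_{i=1}^{m-1} (log(m-1) + i·log(m))^{-d} = 1. Then d < 1. -/
/-- `2u/(2+u) ≤ log(1+u)` for `u ≥ 0` (artanh-type inequality). -/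
lemma log_ge_aux (u : ℝ) (hu : 0 ≤ u) : 2 * u / (2 + u) ≤ Real.log (1 + u) := by
  set f : ℝ → ℝ := fun x => Real.log (1 + x) - 2 * x / (2 + x) with hf
  have hder : ∀ x : ℝ, 0 ≤ x → HasDerivAt f (1 / (1 + x) - 4 / (2 + x) ^ 2) x := by
    intro x hx
    have h1 : HasDerivAt (fun x : ℝ => 1 + x) 1 x := by
      simpa using (hasDerivAt_id x).const_add (1 : ℝ)
    have h2 : HasDerivAt (fun x : ℝ => Real.log (1 + x)) (1 / (1 + x)) x := by
      simpa using h1.log (by positivity)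
    have h3 : HasDerivAt (fun x : ℝ => 2 * x) 2 x := by
      simpa using (hasDerivAt_id x).const_mul (2 : ℝ)
    have h4 : HasDerivAt (fun x : ℝ => 2 + x) 1 x := by
      simpa using (hasDerivAt_id x).const_add (2 : ℝ)
    have h5 : HasDerivAt (fun x : ℝ => 2 * x / (2 + x))
        ((2 * (2 + x) - 2 * x * 1) / (2 + x) ^ 2) x := h3.div h4 (by positivity)
    have h6 := h2.sub h5
    have e : 2 * (2 + x) - 2 * x * 1 = 4 := by ring
    rwa [e] at h6
  have hmono : MonotoneOn f (Set.Ici 0) := by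
    apply monotoneOn_of_deriv_nonneg (convex_Ici 0)
    · intro x hx
      exact ((hder x hx).differentiableAt).continuousAt.continuousWithinAt
    · intro x hx
      rw [interior_Ici] at hx
      exact ((hder x (le_of_lt hx)).differentiableAt).differentiableWithinAt
    · intro x hx
      rw [interior_Ici] at hx
      have hx0 : (0:ℝ) ≤ x := le_of_lt hx
      rw [(hder x hx0).deriv]
      rw [sub_nonneg, div_le_div_iff₀ (by positivity) (by positivity)]
      nlinarith
  have h0 : f 0 = 0 := by simp [hf]
  have := hmono (Set.self_mem_Ici) (Set.mem_Ici.2 hu) hu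
  rw [h0] at this
  simpa [hf, sub_nonneg] using this

/-- `2b/a ≤ log(a+b) - log(a-b)` for `0 < b < a`. -/
lemma log_sub_log_ge {a b : ℝ} (hb : 0 < b) (hba : b < a) :
    2 * b / a ≤ Real.log (a + b) - Real.log (a - b) := by
  have hab : 0 < a - b := by linarith
  have ha : 0 < a := lt_trans hb hba
  have key := log_ge_aux (2 * b / (a - b)) (by positivity)
  have e1 : 1 + 2 * b / (a - b) = (a + b) / (a - b) := by field_simp; ring
  have e2 : 2 * (2 * b / (a - b)) / (2 + 2 * b / (a - b)) = 2 * b / a := by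
    rw [show 2 + 2 * b / (a - b) = 2 * a / (a - b) by field_simp; ring]
    rw [div_div_eq_mul_div]
    rw [div_eq_div_iff (by positivity) (ne_of_gt ha)]
    field_simp
  rw [e1, e2] at key
  rwa [Real.log_div (by positivity) (ne_of_gt hab)] at key

theorem stmt17 (m : ℕ) (hm : 3 ≤ m) (d : ℝ) (hd : 0 < d)
    (hsol : ∑ i ∈ Finset.Icc 1 (m - 1),
      (Real.log (m - 1) + i * Real.log m) ^ (-d) = 1) :
    d < 1 := by
  by_contra hcon
  push_neg at hcon
  set M : ℝ := (m : ℝ) with hM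
  have hM3 : (3:ℝ) ≤ M := by rw [hM]; exact_mod_cast hm
  set c : ℝ := Real.log (M - 1) with hc
  set g : ℝ := Real.log M with hg
  have hc0 : 0 < c := Real.log_pos (by linarith)
  have hg0 : 0 < g := Real.log_pos (by linarith)
  -- g < 2c since m < (m-1)^2
  have hg2c : g < 2 * c := by
    have h1 : M < (M - 1) ^ 2 := by nlinarith
    have h2 : Real.log M < Real.log ((M - 1) ^ 2) := Real.log_lt_log (by linarith) h1
    rwa [Real.log_pow, Nat.cast_ofNat] at h2
  -- base ≥ 1 for all relevant i
  have hbase : ∀ i : ℕ, 1 ≤ i → (1 : ℝ) ≤ c + i * g := by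
    intro i hi
    have hi1 : (1:ℝ) ≤ (i : ℝ) := by exact_mod_cast hi
    have hcl : Real.log 2 ≤ c := Real.log_le_log (by norm_num) (by linarith)
    have hgl : Real.log 3 ≤ g := Real.log_le_log (by norm_num) hM3
    have h6 : (1:ℝ) ≤ Real.log 6 := by
      rw [Real.le_log_iff_exp_le (by norm_num)]
      have := Real.exp_one_lt_d9
      linarith
    have h23 : Real.log 6 = Real.log 2 + Real.log 3 := by
      rw [← Real.log_mul (by norm_num) (by norm_num)]; norm_num
    nlinarith [mul_le_mul_of_nonneg_right hgl (by linarith : (0:ℝ) ≤ (i:ℝ) - 1), hg0]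
  -- the telescoping majorant
  set F : ℕ → ℝ := fun j => Real.log (c + j * g + g / 2) / g with hF
  -- per-term bound
  have hterm : ∀ i : ℕ, 1 ≤ i →
      (c + i * g) ^ (-d) ≤ F i - F (i - 1) := by
    intro i hi
    set L : ℝ := c + i * g with hL
    have hL1 : (1:ℝ) ≤ L := hbase i hi
    have hL0 : (0:ℝ) < L := by linarith
    have s1 : L ^ (-d) ≤ L ^ (-(1:ℝ)) :=
      Real.rpow_le_rpow_of_exponent_le hL1 (by linarith)
    have s2 : L ^ (-(1:ℝ)) = L⁻¹ := Real.rpow_neg_one L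
    have hb : (0:ℝ) < g / 2 := by linarith
    have hba : g / 2 < L := by
      have hi1 : (1:ℝ) ≤ (i : ℝ) := by exact_mod_cast hi
      nlinarith
    have s3 := log_sub_log_ge hb hba
    have e3 : 2 * (g / 2) / L = g / L := by ring
    rw [e3] at s3
    have hii : ((i - 1 : ℕ) : ℝ) = (i : ℝ) - 1 := by
      have : 1 ≤ i := hi
      push_cast [Nat.cast_sub this]
      ring
    have e4 : L + g / 2 = c + i * g + g / 2 := by rw [hL]
    have e5 : L - g / 2 = c + ((i - 1 : ℕ) : ℝ) * g + g / 2 := by rw [hL, hii]; ring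
    have s4 : g / L ≤ g * (F i - F (i - 1)) := by
      rw [hF]
      simp only []
      rw [mul_sub, mul_div_cancel₀ _ (ne_of_gt hg0), mul_div_cancel₀ _ (ne_of_gt hg0)]
      rw [← e4, ← e5]
      exact s3
    have s5 : L⁻¹ ≤ F i - F (i - 1) :=
      le_of_mul_le_mul_left (by rwa [← div_eq_mul_inv]) hg0
    calc L ^ (-d) ≤ L ^ (-(1:ℝ)) := s1
      _ = L⁻¹ := s2
      _ ≤ F i - F (i - 1) := s5
  -- rewrite the sum over Icc as a sum over range
  have hIcc : Finset.Icc 1 (m - 1) = Finset.Ico 1 m := by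
    rw [← Finset.Ico_add_one_right_eq_Icc]
    congr 1
    omega
  rw [hIcc, Finset.sum_Ico_eq_sum_range] at hsol
  have hsum : ∑ i ∈ Finset.range (m - 1), (c + ((1 + i : ℕ) : ℝ) * g) ^ (-d) ≤
      ∑ i ∈ Finset.range (m - 1), (F (i + 1) - F i) := by
    apply Finset.sum_le_sum
    intro i _
    have := hterm (1 + i) (by omega)
    have e : 1 + i - 1 = i := by omega
    rw [e] at this
    simpa [add_comm] using this
  rw [Finset.sum_range_sub F] at hsum
  -- final bound : F (m-1) - F 0 < 1
  have hcast : ((m - 1 : ℕ) : ℝ) = M - 1 := by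
    push_cast [Nat.cast_sub (by omega : 1 ≤ m)]
    ring
  have hx : (0:ℝ) < c + g / 2 := by positivity
  have hXY : c + (M - 1) * g + g / 2 < (c + g / 2) * M := by nlinarith
  have hlog : Real.log (c + (M - 1) * g + g / 2) < Real.log (c + g / 2) + g := by
    have h1 := Real.log_lt_log (by nlinarith) hXY
    rwa [Real.log_mul (ne_of_gt hx) (by positivity : M ≠ 0), ← hg] at h1
  have hfin : F (m - 1) - F 0 < 1 := by
    rw [hF]
    simp only [Nat.cast_zero, zero_mul, add_zero, hcast]
    rw [div_sub_div_same, div_lt_one hg0]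
    linarith
  rw [hsol] at hsum
  linarith
end

section
/- Let m ≥ 3 and let a_i = log(log(m-1) + i·log(m)) for i = 1,...,m-1. Over all probability vectors (p_1,...,p_{m-1}) with all p_i > 0, the function U(p) = (−∑ p_i log p_i)/(∑ p_i a_i) attains its maximum at p_i = (log(m-1) + i·log m)^{-d}, where d > 0 solves ∑_{i=1}^{m-1} (log(m-1)+i·log m)^{-d} = 1, and the maximum value equals d. -/
theorem stmt18 (m : ℕ) (hm : 3 ≤ m) (d : ℝ) (hd : 0 < d)
    (hsol : ∑ i ∈ Finset.Icc 1 (m - 1),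
      (Real.log (m - 1) + i * Real.log m) ^ (-d) = 1) :
    (∀ p : ℕ → ℝ, (∀ i ∈ Finset.Icc 1 (m - 1), 0 < p i) →
      ∑ i ∈ Finset.Icc 1 (m - 1), p i = 1 →
      (-∑ i ∈ Finset.Icc 1 (m - 1), p i * Real.log (p i)) /
          (∑ i ∈ Finset.Icc 1 (m - 1),
            p i * Real.log (Real.log (m - 1) + i * Real.log m)) ≤ d) ∧
    (-∑ i ∈ Finset.Icc 1 (m - 1),
        (Real.log (m - 1) + i * Real.log m) ^ (-d) *
          Real.log ((Real.log (m - 1) + i * Real.log m) ^ (-d))) /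
      (∑ i ∈ Finset.Icc 1 (m - 1),
        (Real.log (m - 1) + i * Real.log m) ^ (-d) *
          Real.log (Real.log (m - 1) + i * Real.log m)) = d := by
  set S := Finset.Icc 1 (m - 1) with hS
  set b : ℕ → ℝ := fun i => Real.log (m - 1) + i * Real.log m with hbdef
  set q : ℕ → ℝ := fun i => b i ^ (-d) with hqdef
  have hm3 : (3:ℝ) ≤ (m:ℝ) := by exact_mod_cast hm
  have hlog3 : 1 < Real.log 3 :=
    (Real.lt_log_iff_exp_lt (by norm_num)).2 (by linarith [Real.exp_one_lt_d9])
  have hb1 : ∀ i ∈ S, 1 < b i := by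
    intro i hi
    obtain ⟨hi1, _⟩ := Finset.mem_Icc.mp hi
    have hi1' : (1:ℝ) ≤ (i:ℝ) := by exact_mod_cast hi1
    have h1 : Real.log 2 ≤ Real.log ((m:ℝ) - 1) :=
      Real.log_le_log (by norm_num) (by linarith)
    have h2 : Real.log 3 ≤ Real.log (m:ℝ) := Real.log_le_log (by norm_num) hm3
    have h3 : (0:ℝ) < Real.log 2 := Real.log_pos (by norm_num)
    have h4 : Real.log 3 ≤ (i:ℝ) * Real.log (m:ℝ) := by
      nlinarith
    simp only [hbdef]
    nlinarith
  have hbpos : ∀ i ∈ S, 0 < b i := fun i hi => lt_trans one_pos (hb1 i hi)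
  have hlogb : ∀ i ∈ S, 0 < Real.log (b i) := fun i hi => Real.log_pos (hb1 i hi)
  have hqpos : ∀ i ∈ S, 0 < q i := fun i hi => Real.rpow_pos_of_pos (hbpos i hi) _
  have hlogq : ∀ i ∈ S, Real.log (q i) = -d * Real.log (b i) := by
    intro i hi
    simp only [hqdef]
    rw [Real.log_rpow (hbpos i hi)]
  have hSne : S.Nonempty := ⟨1, Finset.mem_Icc.mpr ⟨le_refl 1, by omega⟩⟩
  have hq1 : ∑ i ∈ S, q i = 1 := hsol
  constructor
  · intro p hp hp1
    have hDp : 0 < ∑ i ∈ S, p i * Real.log (b i) :=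
      Finset.sum_pos (fun i hi => mul_pos (hp i hi) (hlogb i hi)) hSne
    rw [div_le_iff₀ hDp]
    have key : ∀ i ∈ S, p i * (-d * Real.log (b i) - Real.log (p i)) ≤ q i - p i := by
      intro i hi
      have hpi := hp i hi
      have hqi := hqpos i hi
      have hlog : Real.log (q i / p i) = -d * Real.log (b i) - Real.log (p i) := by
        rw [Real.log_div (ne_of_gt hqi) (ne_of_gt hpi), hlogq i hi]
      have h1 : Real.log (q i / p i) ≤ q i / p i - 1 :=
        Real.log_le_sub_one_of_pos (div_pos hqi hpi)
      have h2 : p i * (q i / p i) = q i := by field_simp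
      nlinarith [mul_le_mul_of_nonneg_left h1 hpi.le]
    have hsum : ∑ i ∈ S, p i * (-d * Real.log (b i) - Real.log (p i)) ≤ 0 := by
      calc ∑ i ∈ S, p i * (-d * Real.log (b i) - Real.log (p i))
          ≤ ∑ i ∈ S, (q i - p i) := Finset.sum_le_sum key
        _ = 0 := by rw [Finset.sum_sub_distrib, hq1, hp1]; ring
    have hexp : ∑ i ∈ S, p i * (-d * Real.log (b i) - Real.log (p i))
        = -d * ∑ i ∈ S, p i * Real.log (b i) - ∑ i ∈ S, p i * Real.log (p i) := by
      rw [Finset.mul_sum, ← Finset.sum_sub_distrib]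
      exact Finset.sum_congr rfl (fun i _ => by ring)
    rw [hexp] at hsum
    linarith
  · have hD : 0 < ∑ i ∈ S, q i * Real.log (b i) :=
      Finset.sum_pos (fun i hi => mul_pos (hqpos i hi) (hlogb i hi)) hSne
    have hnum : -∑ i ∈ S, q i * Real.log (q i) = d * ∑ i ∈ S, q i * Real.log (b i) := by
      rw [Finset.mul_sum, ← Finset.sum_neg_distrib]
      exact Finset.sum_congr rfl (fun i hi => by rw [hlogq i hi]; ring)
    rw [hnum, mul_div_assoc, div_self (ne_of_gt hD), mul_one]
end
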